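/- arXiv:2312.10558 — 2 statements merged into one kernel-verified Lean document; each statement's English description precedes it below -/
import Mathlib

section
/- The Wald statistic from the control-function approach equals a Hausman-type quadratic form: ρ̂_cf^⊤ [σ̂_u² (V̂^⊤M_X V̂)^{-1}]^{-1} ρ̂_cf = (β̂_ols − β̂_{2sls})^⊤ [σ̂_u²((Ŷ₁^⊤M_{Z₁}Ŷ₁)^{-1} − (Y₁^⊤M_{Z₁}Y₁)^{-1})]^{-1} (β̂_ols − β̂_{2sls}), where Ŷ₁ := P_Z Y₁ and σ̂_u² > 0 is any scalar. -/
open Matrix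

noncomputable def proj {n : ℕ} {m : Type*} [Fintype m] [DecidableEq m]
    (A : Matrix (Fin n) m ℝ) : Matrix (Fin n) (Fin n) ℝ :=
  A * (Aᵀ * A)⁻¹ * Aᵀ

noncomputable def annih {n : ℕ} {m : Type*} [Fintype m] [DecidableEq m]
    (A : Matrix (Fin n) m ℝ) : Matrix (Fin n) (Fin n) ℝ :=
  1 - proj A

section aux

variable {n : ℕ} {m : Type*} [Fintype m] [DecidableEq m]

lemma proj_transpose (A : Matrix (Fin n) m ℝ) : (proj A)ᵀ = proj A := by
  simp [proj, Matrix.transpose_mul, Matrix.transpose_nonsing_inv, Matrix.mul_assoc]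

lemma annih_transpose (A : Matrix (Fin n) m ℝ) : (annih A)ᵀ = annih A := by
  simp [annih, transpose_sub, proj_transpose]

lemma proj_mul_col (A : Matrix (Fin n) m ℝ) [Invertible (Aᵀ * A)]
    {p : Type*} (c : Matrix m p ℝ) : proj A * (A * c) = A * c := by
  simp only [proj, Matrix.mul_assoc]
  rw [← Matrix.mul_assoc Aᵀ A c, Matrix.inv_mul_cancel_left_of_invertible]

lemma annih_mul_col (A : Matrix (Fin n) m ℝ) [Invertible (Aᵀ * A)]
    {p : Type*} (c : Matrix m p ℝ) : annih A * (A * c) = 0 := by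
  rw [annih, Matrix.sub_mul, Matrix.one_mul, proj_mul_col, sub_self]

lemma proj_idem (A : Matrix (Fin n) m ℝ) [Invertible (Aᵀ * A)]
    {p : Type*} (C : Matrix (Fin n) p ℝ) : proj A * (proj A * C) = proj A * C := by
  have h : proj A * C = A * ((Aᵀ * A)⁻¹ * (Aᵀ * C)) := by
    simp only [proj, Matrix.mul_assoc]
  rw [h, proj_mul_col]

lemma proj_fromColumns_mul {n d k m : ℕ}
    (Y₁ : Matrix (Fin n) (Fin d) ℝ) (Z₁ : Matrix (Fin n) (Fin k) ℝ)
    (X : Matrix (Fin n) (Fin d ⊕ Fin k) ℝ) (hX : X = fromCols Y₁ Z₁)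
    [Invertible (Xᵀ * X)]
    (G W : Matrix (Fin n) (Fin m) ℝ) (c : Matrix (Fin d ⊕ Fin k) (Fin m) ℝ)
    (hc : X * c = W)
    (h1 : Y₁ᵀ * G = Y₁ᵀ * W) (h2 : Z₁ᵀ * G = Z₁ᵀ * W) :
    proj X * G = W := by
  have hXG : Xᵀ * G = (Xᵀ * X) * c := by
    rw [Matrix.mul_assoc, hc, hX, transpose_fromCols, fromRows_mul, fromRows_mul, h1, h2]
  simp only [proj, Matrix.mul_assoc]
  rw [hXG, Matrix.inv_mul_cancel_left_of_invertible, hc]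

end aux

theorem stmt_11 {n d k₁ k₂ : ℕ}
    (Y₁ : Matrix (Fin n) (Fin d) ℝ) (Y₂ : Matrix (Fin n) (Fin 1) ℝ)
    (Z₁ : Matrix (Fin n) (Fin k₁) ℝ) (Z₂ : Matrix (Fin n) (Fin k₂) ℝ)
    (Z : Matrix (Fin n) (Fin k₁ ⊕ Fin k₂) ℝ) (hZ : Z = fromCols Z₁ Z₂)
    (X : Matrix (Fin n) (Fin d ⊕ Fin k₁) ℝ) (hX : X = fromCols Y₁ Z₁)
    (Vhat : Matrix (Fin n) (Fin d) ℝ) (hV : Vhat = annih Z * Y₁)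
    (Yhat : Matrix (Fin n) (Fin d) ℝ) (hYhat : Yhat = proj Z * Y₁)
    (hZZ : Invertible (Zᵀ * Z)) (hZ₁Z₁ : Invertible (Z₁ᵀ * Z₁))
    (hXX : Invertible (Xᵀ * X))
    (hYMZY : Invertible (Y₁ᵀ * annih Z * Y₁))
    (hYMY : Invertible (Y₁ᵀ * annih Z₁ * Y₁))
    (hYPY : Invertible (Y₁ᵀ * (proj Z - proj Z₁) * Y₁))
    (hVMV : Invertible (Vhatᵀ * annih X * Vhat))
    (hYhMYh : Invertible (Yhatᵀ * annih Z₁ * Yhat))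
    (hdiff : ((Yhatᵀ * annih Z₁ * Yhat)⁻¹ - (Y₁ᵀ * annih Z₁ * Y₁)⁻¹).PosDef)
    (σu2 : ℝ) (hσ : 0 < σu2)
    (βols β2sls ρcf : Matrix (Fin d) (Fin 1) ℝ)
    (hβols : βols = (Y₁ᵀ * annih Z₁ * Y₁)⁻¹ * (Y₁ᵀ * annih Z₁ * Y₂))
    (hβ2sls : β2sls = (Y₁ᵀ * (proj Z - proj Z₁) * Y₁)⁻¹ *
      (Y₁ᵀ * (proj Z - proj Z₁) * Y₂))
    (hρ : ρcf = (Vhatᵀ * annih X * Vhat)⁻¹ * (Vhatᵀ * annih X * Y₂)) :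
    ρcfᵀ * (σu2 • (Vhatᵀ * annih X * Vhat)⁻¹)⁻¹ * ρcf =
    (βols - β2sls)ᵀ *
      (σu2 • ((Yhatᵀ * annih Z₁ * Yhat)⁻¹ - (Y₁ᵀ * annih Z₁ * Y₁)⁻¹))⁻¹ *
      (βols - β2sls) := by
  haveI := hZZ; haveI := hZ₁Z₁; haveI := hXX; haveI := hYMZY; haveI := hYMY
  haveI := hYPY; haveI := hVMV
  -- basic projection facts
  have hZ1eq : Z₁ = Z * (fromRows (1 : Matrix (Fin k₁) (Fin k₁) ℝ) (0 : Matrix (Fin k₂) (Fin k₁) ℝ) : Matrix (Fin k₁ ⊕ Fin k₂) (Fin k₁) ℝ) := by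
    rw [hZ, fromCols_mul_fromRows]; simp
  have hMzZ1M : annih Z * Z₁ = 0 := by rw [hZ1eq]; exact annih_mul_col Z _
  have hPzZ1M : proj Z * Z₁ = Z₁ := by rw [hZ1eq]; exact proj_mul_col Z _
  have hPz1expand : proj Z₁ = Z₁ * ((Z₁ᵀ * Z₁)⁻¹ * Z₁ᵀ) := by
    simp only [proj, Matrix.mul_assoc]
  have hPzPz1M : proj Z * proj Z₁ = proj Z₁ := by
    rw [hPz1expand, ← Matrix.mul_assoc, hPzZ1M]
  have hPz1PzM : proj Z₁ * proj Z = proj Z₁ := by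
    have := congrArg Matrix.transpose hPzPz1M
    simpa [Matrix.transpose_mul, proj_transpose] using this
  have hPzPzM : proj Z * proj Z = proj Z := by
    have := proj_idem Z (1 : Matrix (Fin n) (Fin n) ℝ)
    simpa [Matrix.mul_one] using this
  have hMzPz1M : annih Z * proj Z₁ = 0 := by
    rw [show annih Z = 1 - proj Z from rfl, Matrix.sub_mul, Matrix.one_mul, hPzPz1M, sub_self]
  have hMzMz1M : annih Z * annih Z₁ = annih Z := by
    rw [show annih Z₁ = 1 - proj Z₁ from rfl, Matrix.mul_sub, Matrix.mul_one, hMzPz1M, sub_zero]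
  have hMzMzM : annih Z * annih Z = annih Z := by
    rw [show annih Z = 1 - proj Z from rfl]
    simp only [Matrix.mul_sub, Matrix.sub_mul, Matrix.one_mul, Matrix.mul_one, hPzPzM]
    abel
  have hZ1tMzM : Z₁ᵀ * annih Z = 0 := by
    have := congrArg Matrix.transpose hMzZ1M
    simpa [Matrix.transpose_mul, annih_transpose] using this
  have hMz1Z1M : annih Z₁ * Z₁ = 0 := by
    have := annih_mul_col Z₁ (1 : Matrix (Fin k₁) (Fin k₁) ℝ)
    simpa [Matrix.mul_one] using this
  have hZ1tMz1M : Z₁ᵀ * annih Z₁ = 0 := by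
    have := congrArg Matrix.transpose hMz1Z1M
    simpa [Matrix.transpose_mul, annih_transpose] using this
  have hPz1Z1M : proj Z₁ * Z₁ = Z₁ := by
    have := proj_mul_col Z₁ (1 : Matrix (Fin k₁) (Fin k₁) ℝ)
    simpa [Matrix.mul_one] using this
  have hZ1tPz1M : Z₁ᵀ * proj Z₁ = Z₁ᵀ := by
    have := congrArg Matrix.transpose hPz1Z1M
    simpa [Matrix.transpose_mul, proj_transpose] using this
  -- applied forms
  have F3 : ∀ {p : Type} (C : Matrix (Fin n) p ℝ), proj Z * (proj Z₁ * C) = proj Z₁ * C := by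
    intro p C; rw [← Matrix.mul_assoc, hPzPz1M]
  have F4 : ∀ {p : Type} (C : Matrix (Fin n) p ℝ), annih Z * (proj Z₁ * C) = 0 := by
    intro p C; rw [← Matrix.mul_assoc, hMzPz1M, Matrix.zero_mul]
  have F5 : ∀ {p : Type} (C : Matrix (Fin n) p ℝ), annih Z * (annih Z₁ * C) = annih Z * C := by
    intro p C; rw [← Matrix.mul_assoc, hMzMz1M]
  have F6 : ∀ {p : Type} (C : Matrix (Fin n) p ℝ), annih Z * (annih Z * C) = annih Z * C := by
    intro p C; rw [← Matrix.mul_assoc, hMzMzM]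
  have F7 : ∀ {p : Type} (C : Matrix (Fin n) p ℝ), proj Z₁ * (proj Z * C) = proj Z₁ * C := by
    intro p C; rw [← Matrix.mul_assoc, hPz1PzM]
  have FzPz : ∀ {p : Type} (C : Matrix (Fin n) p ℝ), proj Z * (proj Z * C) = proj Z * C := by
    intro p C; rw [← Matrix.mul_assoc, hPzPzM]
  have FZ1tMz : ∀ {p : Type} (C : Matrix (Fin n) p ℝ), Z₁ᵀ * (annih Z * C) = 0 := by
    intro p C; rw [← Matrix.mul_assoc, hZ1tMzM, Matrix.zero_mul]
  have FZ1tMz1 : ∀ {p : Type} (C : Matrix (Fin n) p ℝ), Z₁ᵀ * (annih Z₁ * C) = 0 := by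
    intro p C; rw [← Matrix.mul_assoc, hZ1tMz1M, Matrix.zero_mul]
  have FZ1tPz1 : ∀ {p : Type} (C : Matrix (Fin n) p ℝ), Z₁ᵀ * (proj Z₁ * C) = Z₁ᵀ * C := by
    intro p C; rw [← Matrix.mul_assoc, hZ1tPz1M]
  -- abbreviations
  set S := Y₁ᵀ * annih Z * Y₁ with hSdef
  set A := Y₁ᵀ * annih Z₁ * Y₁ with hAdef
  set Bm := Y₁ᵀ * (proj Z - proj Z₁) * Y₁ with hBdef
  have hAT : Aᵀ = A := by
    rw [hAdef]; simp [Matrix.transpose_mul, annih_transpose, Matrix.mul_assoc]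
  have hST : Sᵀ = S := by
    rw [hSdef]; simp [Matrix.transpose_mul, annih_transpose, Matrix.mul_assoc]
  have hBT : Bmᵀ = Bm := by
    rw [hBdef]; simp [Matrix.transpose_mul, Matrix.transpose_sub, proj_transpose, Matrix.mul_assoc]
  have hABS : A = Bm + S := by
    rw [hAdef, hBdef, hSdef,
      show annih Z₁ = (proj Z - proj Z₁) + annih Z by simp only [annih]; abel,
      Matrix.mul_add, Matrix.add_mul]
  have hVT : Vhatᵀ = Y₁ᵀ * annih Z := by rw [hV, Matrix.transpose_mul, annih_transpose]
  -- T1 : projection of Vhat onto X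
  have hPXV : proj X * Vhat = annih Z₁ * (Y₁ * (A⁻¹ * S)) := by
    apply proj_fromColumns_mul Y₁ Z₁ X hX _ _
      (fromRows (A⁻¹ * S) (-((Z₁ᵀ * Z₁)⁻¹ * (Z₁ᵀ * (Y₁ * (A⁻¹ * S))))))
    · rw [hX, fromCols_mul_fromRows]
      simp only [annih, proj, Matrix.sub_mul, Matrix.one_mul, Matrix.mul_neg, Matrix.mul_assoc]
      abel
    · rw [hV]
      have hR : Y₁ᵀ * (annih Z₁ * (Y₁ * (A⁻¹ * S))) = A * (A⁻¹ * S) := by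
        rw [hAdef]; simp only [Matrix.mul_assoc]
      rw [hR, Matrix.mul_inv_cancel_left_of_invertible, hSdef, Matrix.mul_assoc]
    · rw [hV, FZ1tMz, FZ1tMz1]
  -- T2 : projection of Y₂ onto X
  have hPXY2 : proj X * Y₂ = proj Z₁ * Y₂ + annih Z₁ * (Y₁ * βols) := by
    apply proj_fromColumns_mul Y₁ Z₁ X hX _ _
      (fromRows βols ((Z₁ᵀ * Z₁)⁻¹ * (Z₁ᵀ * (Y₂ - Y₁ * βols))))
    · rw [hX, fromCols_mul_fromRows]
      simp only [annih, proj, Matrix.sub_mul, Matrix.one_mul, Matrix.mul_sub, Matrix.mul_assoc]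
      abel
    · have h1 : Y₁ᵀ * (annih Z₁ * (Y₁ * βols)) = A * βols := by
        rw [hAdef]; simp only [Matrix.mul_assoc]
      rw [Matrix.mul_add, h1, hβols, Matrix.mul_inv_cancel_left_of_invertible]
      have h2 : proj Z₁ * Y₂ + annih Z₁ * Y₂ = Y₂ := by
        rw [show annih Z₁ = 1 - proj Z₁ from rfl, Matrix.sub_mul, Matrix.one_mul]; abel
      rw [Matrix.mul_assoc Y₁ᵀ (annih Z₁) Y₂, ← Matrix.mul_add, h2]
    · rw [Matrix.mul_add, FZ1tMz1, add_zero, FZ1tPz1]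
  -- T3/T4 : Hausman Gram identity
  have hVVhat : Vhatᵀ * Vhat = S := by
    rw [hVT, hV, Matrix.mul_assoc, F6, hSdef, Matrix.mul_assoc]
  have hW1 : Vhatᵀ * annih X * Vhat = S * (A⁻¹ * Bm) := by
    have h2 : Vhatᵀ * (annih Z₁ * (Y₁ * (A⁻¹ * S))) = S * (A⁻¹ * S) := by
      rw [hVT, Matrix.mul_assoc, F5, hSdef]
      simp only [Matrix.mul_assoc]
    have hBmAS : Bm = A - S := by rw [hABS]; abel
    rw [Matrix.mul_assoc, show annih X = 1 - proj X from rfl, Matrix.sub_mul, Matrix.one_mul,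
      Matrix.mul_sub, hPXV, hVVhat, h2, hBmAS, Matrix.mul_sub A⁻¹,
      Matrix.inv_mul_of_invertible, Matrix.mul_sub S, Matrix.mul_one]
  have hW2 : Vhatᵀ * annih X * Vhat = Bm * (A⁻¹ * S) := by
    have hsym : (Vhatᵀ * annih X * Vhat)ᵀ = Vhatᵀ * annih X * Vhat := by
      simp [Matrix.transpose_mul, annih_transpose, Matrix.mul_assoc]
    rw [← hsym, hW1]
    simp [Matrix.transpose_mul, Matrix.transpose_nonsing_inv, hAT, hST, hBT, Matrix.mul_assoc]
  -- T5 : the CF score vector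
  have ht : Vhatᵀ * annih X * Y₂ = Y₁ᵀ * (annih Z * Y₂) - S * βols := by
    rw [Matrix.mul_assoc, show annih X = 1 - proj X from rfl, Matrix.sub_mul, Matrix.one_mul,
      Matrix.mul_sub, hPXY2, Matrix.mul_add, hVT, Matrix.mul_assoc, Matrix.mul_assoc,
      Matrix.mul_assoc, F4, F5, Matrix.mul_zero]
    have h3 : Y₁ᵀ * (annih Z * (Y₁ * βols)) = S * βols := by
      rw [hSdef]; simp only [Matrix.mul_assoc]
    rw [h3]
    abel
  -- T6 : Bm * Δ equals the CF score vector
  have hBΔ : Bm * (βols - β2sls) = Y₁ᵀ * (annih Z * Y₂) - S * βols := by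
    rw [Matrix.mul_sub, hβ2sls, Matrix.mul_inv_cancel_left_of_invertible,
      sub_eq_sub_iff_add_eq_add, ← Matrix.add_mul, ← hABS, hβols,
      Matrix.mul_inv_cancel_left_of_invertible,
      show annih Z₁ = annih Z + (proj Z - proj Z₁) by simp only [annih]; abel,
      Matrix.mul_add, Matrix.add_mul, Matrix.mul_assoc Y₁ᵀ (annih Z) Y₂]
  -- T7 : Hausman contrast via the CF coefficient
  have hWinv : (Vhatᵀ * annih X * Vhat)⁻¹ = S⁻¹ * (A * Bm⁻¹) := by
    apply Matrix.inv_eq_right_inv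
    rw [hW2]
    simp only [Matrix.mul_assoc, Matrix.mul_inv_cancel_left_of_invertible,
      Matrix.inv_mul_cancel_left_of_invertible, Matrix.mul_inv_of_invertible]
  have hΔ : βols - β2sls = A⁻¹ * (S * ρcf) := by
    rw [hρ, hWinv, ht, ← hBΔ]
    simp only [Matrix.mul_assoc, Matrix.mul_inv_cancel_left_of_invertible,
      Matrix.inv_mul_cancel_left_of_invertible]
  -- T8 : the 2SLS Gram matrix via Yhat
  have hBhat : Yhatᵀ * annih Z₁ * Yhat = Bm := by
    rw [hYhat, Matrix.transpose_mul, proj_transpose, Matrix.mul_assoc, Matrix.mul_assoc,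
      show annih Z₁ = 1 - proj Z₁ from rfl, Matrix.sub_mul, Matrix.one_mul, F7,
      Matrix.mul_sub (proj Z), FzPz, F3, hBdef, Matrix.mul_assoc, Matrix.sub_mul]
  -- T9 : inverse of the scaled variance difference
  have hDinv : (σu2 • ((Yhatᵀ * annih Z₁ * Yhat)⁻¹ - A⁻¹))⁻¹ = σu2⁻¹ • (A * (S⁻¹ * Bm)) := by
    apply Matrix.inv_eq_right_inv
    rw [hBhat]
    have hdiffeq : Bm⁻¹ - A⁻¹ = Bm⁻¹ * (S * A⁻¹) := by
      rw [show S = A - Bm by rw [hABS]; abel, Matrix.sub_mul, Matrix.mul_inv_of_invertible,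
        Matrix.mul_sub, Matrix.mul_one, Matrix.inv_mul_cancel_left_of_invertible]
    rw [hdiffeq, Matrix.smul_mul, Matrix.mul_smul, smul_smul, mul_inv_cancel₀ (ne_of_gt hσ),
      one_smul]
    simp only [Matrix.mul_assoc, Matrix.inv_mul_cancel_left_of_invertible,
      Matrix.mul_inv_cancel_left_of_invertible]
    exact Matrix.inv_mul_of_invertible Bm
  -- T10 : inverse of the scaled CF variance
  have hLinv : (σu2 • (Vhatᵀ * annih X * Vhat)⁻¹)⁻¹ = σu2⁻¹ • (Bm * (A⁻¹ * S)) := by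
    apply Matrix.inv_eq_right_inv
    rw [Matrix.smul_mul, Matrix.mul_smul, smul_smul, mul_inv_cancel₀ (ne_of_gt hσ), one_smul,
      ← hW2, Matrix.inv_mul_of_invertible]
  -- conclusion
  have hΔT : (βols - β2sls)ᵀ = ρcfᵀ * (S * A⁻¹) := by
    rw [hΔ]
    simp [Matrix.transpose_mul, Matrix.transpose_nonsing_inv, hAT, hST, Matrix.mul_assoc]
  rw [hLinv, hDinv, hΔT, hΔ]
  simp only [Matrix.mul_smul, Matrix.smul_mul]
  congr 1
  simp only [Matrix.mul_assoc, Matrix.inv_mul_cancel_left_of_invertible,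
    Matrix.mul_inv_cancel_left_of_invertible]
end

section
/- V̂^⊤(Y₂ − Xθ̂_{2sls}) = Y₁^⊤M_{Z₁}Y₁ (β̂_ols − β̂_{2sls}), where V̂ = M_Z Y₁ and θ̂_{2sls} = (X^⊤P_Z X)^{-1}X^⊤P_Z Y₂. -/
open Matrix

lemma proj_symm {n : ℕ} {m : Type*} [Fintype m] [DecidableEq m]
    (A : Matrix (Fin n) m ℝ) : (proj A)ᵀ = proj A := by
  unfold proj
  rw [Matrix.transpose_mul, Matrix.transpose_mul, Matrix.transpose_nonsing_inv,
    Matrix.transpose_mul, Matrix.transpose_transpose, Matrix.mul_assoc]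

lemma proj_mul_self {n : ℕ} {m : Type*} [Fintype m] [DecidableEq m]
    (A : Matrix (Fin n) m ℝ) (h : Invertible (Aᵀ * A)) : proj A * A = A := by
  unfold proj
  rw [Matrix.mul_assoc, Matrix.mul_assoc, Matrix.inv_mul_of_invertible,
    Matrix.mul_one]

theorem stmt_15 {n d k₁ k₂ : ℕ}
    (Y₁ : Matrix (Fin n) (Fin d) ℝ) (Y₂ : Matrix (Fin n) (Fin 1) ℝ)
    (Z₁ : Matrix (Fin n) (Fin k₁) ℝ) (Z₂ : Matrix (Fin n) (Fin k₂) ℝ)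
    (Z : Matrix (Fin n) (Fin k₁ ⊕ Fin k₂) ℝ) (hZ : Z = fromCols Z₁ Z₂)
    (X : Matrix (Fin n) (Fin d ⊕ Fin k₁) ℝ) (hX : X = fromCols Y₁ Z₁)
    (Vhat : Matrix (Fin n) (Fin d) ℝ) (hV : Vhat = annih Z * Y₁)
    (hZZ : Invertible (Zᵀ * Z)) (hZ₁Z₁ : Invertible (Z₁ᵀ * Z₁))
    (hXX : Invertible (Xᵀ * X)) (hXPX : Invertible (Xᵀ * proj Z * X))
    (hYMY : Invertible (Y₁ᵀ * annih Z₁ * Y₁))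
    (hYPY : Invertible (Y₁ᵀ * (proj Z - proj Z₁) * Y₁))
    (θ2sls : Matrix (Fin d ⊕ Fin k₁) (Fin 1) ℝ)
    (hθ2sls : θ2sls = (Xᵀ * proj Z * X)⁻¹ * (Xᵀ * proj Z * Y₂))
    (βols β2sls : Matrix (Fin d) (Fin 1) ℝ)
    (hβols : βols = (Y₁ᵀ * annih Z₁ * Y₁)⁻¹ * (Y₁ᵀ * annih Z₁ * Y₂))
    (hβ2sls : β2sls = (Y₁ᵀ * (proj Z - proj Z₁) * Y₁)⁻¹ *
      (Y₁ᵀ * (proj Z - proj Z₁) * Y₂))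
    (hblock : β2sls = θ2sls.submatrix Sum.inl id) :
    Vhatᵀ * (Y₂ - X * θ2sls) = Y₁ᵀ * annih Z₁ * Y₁ * (βols - β2sls) := by
  -- Z₁ is in the column span of Z
  have hZ1 : Z₁ = Z * fromRows (1 : Matrix (Fin k₁) (Fin k₁) ℝ) (0 : Matrix (Fin k₂) (Fin k₁) ℝ) := by
    rw [hZ, Matrix.fromCols_mul_fromRows, Matrix.mul_one, Matrix.mul_zero,
      add_zero]
  have hPZZ1 : proj Z * Z₁ = Z₁ := by
    rw [hZ1, ← Matrix.mul_assoc, proj_mul_self Z hZZ]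
  -- annih Z kills Z₁
  have hMZZ1 : annih Z * Z₁ = 0 := by
    rw [annih, Matrix.sub_mul, Matrix.one_mul, hPZZ1, sub_self]
  -- X θ decomposition
  have hθdecomp : X * θ2sls = Y₁ * β2sls + Z₁ * (toRows₂ θ2sls) := by
    have h1 : θ2sls = fromRows (toRows₁ θ2sls) (toRows₂ θ2sls) :=
      (Matrix.fromRows_toRows θ2sls).symm
    have h2 : toRows₁ θ2sls = β2sls := by
      rw [hblock]; ext i j; rfl
    conv_lhs => rw [hX, h1, Matrix.fromCols_mul_fromRows, h2]
  -- normal equations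
  have hols : Y₁ᵀ * annih Z₁ * Y₁ * βols = Y₁ᵀ * annih Z₁ * Y₂ := by
    rw [hβols, Matrix.mul_inv_cancel_left_of_invertible]
  have h2sls : Y₁ᵀ * (proj Z - proj Z₁) * Y₁ * β2sls
      = Y₁ᵀ * (proj Z - proj Z₁) * Y₂ := by
    rw [hβ2sls, Matrix.mul_inv_cancel_left_of_invertible]
  -- Vhatᵀ = Y₁ᵀ * annih Z
  have hVT : Vhatᵀ = Y₁ᵀ * annih Z := by
    rw [hV, Matrix.transpose_mul, annih, Matrix.transpose_sub,
      Matrix.transpose_one, proj_symm]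
  rw [hVT, hθdecomp]
  have hkill : Y₁ᵀ * annih Z * (Z₁ * toRows₂ θ2sls) = 0 := by
    rw [← Matrix.mul_assoc, Matrix.mul_assoc (Y₁ᵀ) (annih Z) Z₁, hMZZ1,
      Matrix.mul_zero, Matrix.zero_mul]
  have key : Y₁ᵀ * annih Z * Y₂ - Y₁ᵀ * annih Z * Y₁ * β2sls
      = Y₁ᵀ * annih Z₁ * Y₂ - Y₁ᵀ * annih Z₁ * Y₁ * β2sls := by
    have hdiff : Y₁ᵀ * annih Z₁ * Y₂ - Y₁ᵀ * annih Z * Y₂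
        = Y₁ᵀ * annih Z₁ * Y₁ * β2sls - Y₁ᵀ * annih Z * Y₁ * β2sls := by
      have e1 : Y₁ᵀ * annih Z₁ * Y₂ - Y₁ᵀ * annih Z * Y₂
          = Y₁ᵀ * (proj Z - proj Z₁) * Y₂ := by
        simp only [annih]
        rw [Matrix.mul_sub, Matrix.mul_sub, Matrix.mul_sub, Matrix.sub_mul,
          Matrix.sub_mul, Matrix.sub_mul]
        abel
      have eM : Y₁ᵀ * annih Z₁ * Y₁ - Y₁ᵀ * annih Z * Y₁
          = Y₁ᵀ * (proj Z - proj Z₁) * Y₁ := by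
        simp only [annih]
        rw [Matrix.mul_sub, Matrix.mul_sub, Matrix.mul_sub, Matrix.sub_mul,
          Matrix.sub_mul, Matrix.sub_mul]
        abel
      have e2 : Y₁ᵀ * annih Z₁ * Y₁ * β2sls - Y₁ᵀ * annih Z * Y₁ * β2sls
          = Y₁ᵀ * (proj Z - proj Z₁) * Y₁ * β2sls := by
        rw [← Matrix.sub_mul, eM]
      rw [e1, e2, h2sls]
    linear_combination (norm := abel) -hdiff
  calc Y₁ᵀ * annih Z * (Y₂ - (Y₁ * β2sls + Z₁ * toRows₂ θ2sls))
      = Y₁ᵀ * annih Z * Y₂ - Y₁ᵀ * annih Z * Y₁ * β2sls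
        - Y₁ᵀ * annih Z * (Z₁ * toRows₂ θ2sls) := by
        rw [Matrix.mul_sub, Matrix.mul_add, Matrix.mul_assoc (Y₁ᵀ * annih Z) Y₁]
        abel
    _ = Y₁ᵀ * annih Z₁ * Y₂ - Y₁ᵀ * annih Z₁ * Y₁ * β2sls := by
        rw [hkill, sub_zero, key]
    _ = Y₁ᵀ * annih Z₁ * Y₁ * (βols - β2sls) := by
        rw [Matrix.mul_sub, hols]
end
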